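/- arXiv:0906.2776 — 3 statements merged into one kernel-verified Lean document; each statement's English description precedes it below -/
import Mathlib

section
/- Let p : (−1,1) → ℝ be an even continuous function such that every C² solution u : (−1,1) → ℝ of u'' + p·u = 0 vanishing at two distinct points is identically zero. Let u₀ be the solution of u'' + p·u = 0 with u₀(0) = 1, u₀'(0) = 0 (so u₀ has no zeros in (−1,1)), and set Φ(x) = ∫₀ˣ u₀(t)^{−2} dt. Let ψ : (−1,1) → ℝ^m be a C³ curve with ψ' ≠ 0, normalized so that ψ(0) = 0, |ψ'(0)| = 1, ψ''(0) = 0, and satisfying S₁ψ(x) ≤ 2·p(x) for all x ∈ (−1,1). Then |ψ'(x)| ≤ Φ'(|x|) for all x ∈ (−1,1). -/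
open Set

noncomputable section

/-- Ahlfors' Schwarzian `S₁ψ = ⟨ψ',ψ'''⟩/|ψ'|² − 3⟨ψ',ψ''⟩²/|ψ'|⁴ + (3/2)|ψ''|²/|ψ'|²`
for a curve `ψ : ℝ → ℝ^m`. -/
def ahlforsS1 {m : ℕ} (ψ : ℝ → EuclideanSpace ℝ (Fin m)) (x : ℝ) : ℝ :=
  (inner ℝ (deriv ψ x) (deriv (deriv (deriv ψ)) x) : ℝ) / ‖deriv ψ x‖ ^ 2 -
    3 * (inner ℝ (deriv ψ x) (deriv (deriv ψ) x) : ℝ) ^ 2 / ‖deriv ψ x‖ ^ 4 +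
    (3 / 2) * ‖deriv (deriv ψ) x‖ ^ 2 / ‖deriv ψ x‖ ^ 2

lemma sturm_comparison_aux (p u v v' v'' : ℝ → ℝ)
    (hu : ContDiffOn ℝ 2 u (Ioo (-1 : ℝ) 1))
    (huode : ∀ x ∈ Ioo (-1 : ℝ) 1, deriv (deriv u) x + p x * u x = 0)
    (hu0 : u 0 = 1) (hu'0 : deriv u 0 = 0)
    (hupos : ∀ x ∈ Ioo (-1 : ℝ) 1, 0 < u x)
    (hv : ∀ x ∈ Ioo (-1 : ℝ) 1, HasDerivAt v (v' x) x)
    (hv' : ∀ x ∈ Ioo (-1 : ℝ) 1, HasDerivAt v' (v'' x) x)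
    (hv0 : v 0 = 1) (hv'0 : v' 0 = 0)
    (hineq : ∀ x ∈ Ioo (-1 : ℝ) 1, 0 ≤ v'' x + p x * v x) :
    ∀ x ∈ Ioo (-1 : ℝ) 1, u x ≤ v x := by
  have h0 : (0 : ℝ) ∈ Ioo (-1 : ℝ) 1 := by norm_num
  have hud : DifferentiableOn ℝ u (Ioo (-1 : ℝ) 1) := hu.differentiableOn (by norm_num)
  have hu1 : ContDiffOn ℝ 1 (deriv u) (Ioo (-1 : ℝ) 1) :=
    hu.deriv_of_isOpen isOpen_Ioo (by norm_num)
  have hdu : ∀ x ∈ Ioo (-1 : ℝ) 1, HasDerivAt u (deriv u x) x := fun x hx =>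
    (hud.differentiableAt (isOpen_Ioo.mem_nhds hx)).hasDerivAt
  have hdu' : ∀ x ∈ Ioo (-1 : ℝ) 1, HasDerivAt (deriv u) (deriv (deriv u) x) x := fun x hx =>
    ((hu1.differentiableOn (by norm_num)).differentiableAt (isOpen_Ioo.mem_nhds hx)).hasDerivAt
  set W : ℝ → ℝ := fun t => v' t * u t - v t * deriv u t with hWdef
  have hW : ∀ x ∈ Ioo (-1 : ℝ) 1,
      HasDerivAt W ((v'' x + p x * v x) * u x) x := by
    intro x hx
    have h1 := ((hv' x hx).mul (hdu x hx)).sub ((hv x hx).mul (hdu' x hx))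
    refine h1.congr_deriv ?_
    have := huode x hx
    have hdd : deriv (deriv u) x = -(p x * u x) := by linarith
    rw [hdd]; ring
  have hW0 : W 0 = 0 := by simp [hWdef, hv'0, hu0, hu'0]
  set R : ℝ → ℝ := fun t => v t / u t with hRdef
  have hR : ∀ x ∈ Ioo (-1 : ℝ) 1, HasDerivAt R (W x / u x ^ 2) x := by
    intro x hx
    exact (hv x hx).div (hdu x hx) (hupos x hx).ne'
  have hR0 : R 0 = 1 := by simp [hRdef, hv0, hu0]
  -- main
  intro x hx
  have hxm : -1 < x := hx.1
  have hxM : x < 1 := hx.2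
  have key : 1 ≤ R x := by
    rcases le_or_gt 0 x with hx0 | hx0
    · have hsub : Icc (0 : ℝ) x ⊆ Ioo (-1 : ℝ) 1 := fun t ht =>
        ⟨by linarith [ht.1], by linarith [ht.2]⟩
      have hWmono : MonotoneOn W (Icc (0 : ℝ) x) := by
        apply monotoneOn_of_deriv_nonneg (convex_Icc 0 x)
        · exact fun t ht => ((hW t (hsub ht)).continuousAt).continuousWithinAt
        · intro t ht
          rw [interior_Icc] at ht
          exact ((hW t (hsub (Ioo_subset_Icc_self ht))).differentiableAt).differentiableWithinAt
        · intro t ht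
          rw [interior_Icc] at ht
          have ht' : t ∈ Ioo (-1 : ℝ) 1 := hsub (Ioo_subset_Icc_self ht)
          rw [(hW t ht').deriv]
          exact mul_nonneg (hineq t ht') (hupos t ht').le
      have hWnn : ∀ t ∈ Icc (0 : ℝ) x, 0 ≤ W t := by
        intro t ht
        have := hWmono (left_mem_Icc.2 hx0) ht ht.1
        rwa [hW0] at this
      have hRmono : MonotoneOn R (Icc (0 : ℝ) x) := by
        apply monotoneOn_of_deriv_nonneg (convex_Icc 0 x)
        · exact fun t ht => ((hR t (hsub ht)).continuousAt).continuousWithinAt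
        · intro t ht
          rw [interior_Icc] at ht
          exact ((hR t (hsub (Ioo_subset_Icc_self ht))).differentiableAt).differentiableWithinAt
        · intro t ht
          rw [interior_Icc] at ht
          have ht' : t ∈ Ioo (-1 : ℝ) 1 := hsub (Ioo_subset_Icc_self ht)
          rw [(hR t ht').deriv]
          exact div_nonneg (hWnn t (Ioo_subset_Icc_self ht)) (sq_nonneg _)
      have := hRmono (left_mem_Icc.2 hx0) (right_mem_Icc.2 hx0) hx0
      rwa [hR0] at this
    · have hsub : Icc x (0 : ℝ) ⊆ Ioo (-1 : ℝ) 1 := fun t ht =>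
        ⟨by linarith [ht.1], by linarith [ht.2]⟩
      have hWmono : MonotoneOn W (Icc x (0 : ℝ)) := by
        apply monotoneOn_of_deriv_nonneg (convex_Icc x 0)
        · exact fun t ht => ((hW t (hsub ht)).continuousAt).continuousWithinAt
        · intro t ht
          rw [interior_Icc] at ht
          exact ((hW t (hsub (Ioo_subset_Icc_self ht))).differentiableAt).differentiableWithinAt
        · intro t ht
          rw [interior_Icc] at ht
          have ht' : t ∈ Ioo (-1 : ℝ) 1 := hsub (Ioo_subset_Icc_self ht)
          rw [(hW t ht').deriv]
          exact mul_nonneg (hineq t ht') (hupos t ht').le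
      have hWnp : ∀ t ∈ Icc x (0 : ℝ), W t ≤ 0 := by
        intro t ht
        have := hWmono ht (right_mem_Icc.2 hx0.le) ht.2
        rwa [hW0] at this
      have hRanti : AntitoneOn R (Icc x (0 : ℝ)) := by
        apply antitoneOn_of_deriv_nonpos (convex_Icc x 0)
        · exact fun t ht => ((hR t (hsub ht)).continuousAt).continuousWithinAt
        · intro t ht
          rw [interior_Icc] at ht
          exact ((hR t (hsub (Ioo_subset_Icc_self ht))).differentiableAt).differentiableWithinAt
        · intro t ht
          rw [interior_Icc] at ht
          have ht' : t ∈ Ioo (-1 : ℝ) 1 := hsub (Ioo_subset_Icc_self ht)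
          rw [(hR t ht').deriv]
          exact div_nonpos_of_nonpos_of_nonneg (hWnp t (Ioo_subset_Icc_self ht)) (sq_nonneg _)
      have := hRanti (left_mem_Icc.2 hx0.le) (right_mem_Icc.2 hx0.le) hx0.le
      rwa [hR0] at this
  have hux : 0 < u x := hupos x hx
  rw [hRdef] at key
  calc u x = 1 * u x := (one_mul _).symm
    _ ≤ (v x / u x) * u x := by
        exact mul_le_mul_of_nonneg_right key hux.le
    _ = v x := by field_simp

set_option maxHeartbeats 800000 in
/-- **Theorem B, first part (Chuaqui–Gevirtz).** With `p` even, continuous and such that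
`u'' + pu = 0` admits no nontrivial solution with two zeros in `(-1,1)`, with `u₀` the
solution with `u₀(0) = 1`, `u₀'(0) = 0` (which has no zeros in `(-1,1)`), and
`Φ(x) = ∫₀ˣ u₀(t)⁻² dt`, any `C³` curve `ψ : (-1,1) → ℝ^m` with `ψ' ≠ 0`, normalized
by `ψ(0) = 0`, `|ψ'(0)| = 1`, `ψ''(0) = 0`, satisfying `S₁ψ(x) ≤ 2p(x)` obeys
`|ψ'(x)| ≤ Φ'(|x|)`. -/
theorem norm_deriv_le_of_ahlforsS1_le {m : ℕ} (p : ℝ → ℝ)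
    (hpc : ContinuousOn p (Ioo (-1 : ℝ) 1))
    (hpeven : ∀ x ∈ Ioo (-1 : ℝ) 1, p (-x) = p x)
    (hode : ∀ u : ℝ → ℝ, ContDiffOn ℝ 2 u (Ioo (-1 : ℝ) 1) →
      (∀ x ∈ Ioo (-1 : ℝ) 1, deriv (deriv u) x + p x * u x = 0) →
      (∃ a ∈ Ioo (-1 : ℝ) 1, ∃ b ∈ Ioo (-1 : ℝ) 1, a ≠ b ∧ u a = 0 ∧ u b = 0) →
      ∀ x ∈ Ioo (-1 : ℝ) 1, u x = 0)
    (u₀ : ℝ → ℝ) (hu₀ : ContDiffOn ℝ 2 u₀ (Ioo (-1 : ℝ) 1))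
    (hu₀ode : ∀ x ∈ Ioo (-1 : ℝ) 1, deriv (deriv u₀) x + p x * u₀ x = 0)
    (hu₀0 : u₀ 0 = 1) (hu₀'0 : deriv u₀ 0 = 0)
    (hu₀ne : ∀ x ∈ Ioo (-1 : ℝ) 1, u₀ x ≠ 0)
    (Φ : ℝ → ℝ) (hΦ : ∀ x, Φ x = ∫ t in (0 : ℝ)..x, ((u₀ t) ^ 2)⁻¹)
    (ψ : ℝ → EuclideanSpace ℝ (Fin m))
    (hψ : ContDiffOn ℝ 3 ψ (Ioo (-1 : ℝ) 1))
    (hψ' : ∀ x ∈ Ioo (-1 : ℝ) 1, deriv ψ x ≠ 0)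
    (hψ0 : ψ 0 = 0) (hψ'0 : ‖deriv ψ 0‖ = 1) (hψ''0 : deriv (deriv ψ) 0 = 0)
    (hS1 : ∀ x ∈ Ioo (-1 : ℝ) 1, ahlforsS1 ψ x ≤ 2 * p x) :
    ∀ x ∈ Ioo (-1 : ℝ) 1, ‖deriv ψ x‖ ≤ deriv Φ |x| := by
  have h0 : (0 : ℝ) ∈ Ioo (-1 : ℝ) 1 := by norm_num
  -- regularity of the derivatives of ψ
  have hψ1 : ContDiffOn ℝ 2 (deriv ψ) (Ioo (-1 : ℝ) 1) :=
    hψ.deriv_of_isOpen isOpen_Ioo (by norm_num)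
  have hψ2 : ContDiffOn ℝ 1 (deriv (deriv ψ)) (Ioo (-1 : ℝ) 1) :=
    hψ1.deriv_of_isOpen isOpen_Ioo (by norm_num)
  have hd2 : ∀ x ∈ Ioo (-1 : ℝ) 1, HasDerivAt (deriv ψ) (deriv (deriv ψ) x) x := fun x hx =>
    (((hψ1.differentiableOn (by norm_num)).differentiableAt
      (isOpen_Ioo.mem_nhds hx)).hasDerivAt)
  have hd3 : ∀ x ∈ Ioo (-1 : ℝ) 1,
      HasDerivAt (deriv (deriv ψ)) (deriv (deriv (deriv ψ)) x) x := fun x hx =>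
    (((hψ2.differentiableOn (by norm_num)).differentiableAt
      (isOpen_Ioo.mem_nhds hx)).hasDerivAt)
  -- q = |ψ'|² and its derivatives
  set q : ℝ → ℝ := fun x => (inner ℝ (deriv ψ x) (deriv ψ x) : ℝ) with hqdef
  set q' : ℝ → ℝ := fun x => 2 * (inner ℝ (deriv ψ x) (deriv (deriv ψ) x) : ℝ) with hq'def
  set q'' : ℝ → ℝ := fun x =>
    2 * (‖deriv (deriv ψ) x‖ ^ 2 + (inner ℝ (deriv ψ x) (deriv (deriv (deriv ψ)) x) : ℝ))
    with hq''def
  have hqnorm : ∀ x, q x = ‖deriv ψ x‖ ^ 2 := fun x => real_inner_self_eq_norm_sq _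
  have hqpos : ∀ x ∈ Ioo (-1 : ℝ) 1, 0 < q x := by
    intro x hx
    rw [hqnorm]
    exact pow_pos (norm_pos_iff.2 (hψ' x hx)) 2
  have hq : ∀ x ∈ Ioo (-1 : ℝ) 1, HasDerivAt q (q' x) x := by
    intro x hx
    have h1 := (hd2 x hx).inner ℝ (hd2 x hx)
    refine h1.congr_deriv ?_
    simp only [hq'def]
    rw [real_inner_comm (deriv (deriv ψ) x) (deriv ψ x)]
    ring
  have hq' : ∀ x ∈ Ioo (-1 : ℝ) 1, HasDerivAt q' (q'' x) x := by
    intro x hx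
    have h1 := ((hd2 x hx).inner ℝ (hd3 x hx)).const_mul (2 : ℝ)
    refine h1.congr_deriv ?_
    simp only [hq''def]
    rw [← real_inner_self_eq_norm_sq]
    ring
  -- v = q^(-1/4) and its derivatives
  set v : ℝ → ℝ := fun x => q x ^ (-(1/4) : ℝ) with hvdef
  set v' : ℝ → ℝ := fun x => -(1/4) * q x ^ (-(5/4) : ℝ) * q' x with hv'def
  set v'' : ℝ → ℝ := fun x =>
    -(1/4) * (-(5/4) * q x ^ (-(9/4) : ℝ) * q' x * q' x + q x ^ (-(5/4) : ℝ) * q'' x)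
    with hv''def
  have hv : ∀ x ∈ Ioo (-1 : ℝ) 1, HasDerivAt v (v' x) x := by
    intro x hx
    have h1 := (hq x hx).rpow_const (p := (-(1/4) : ℝ)) (Or.inl (hqpos x hx).ne')
    convert h1 using 1
    rw [show (-(1/4) : ℝ) - 1 = -(5/4) by norm_num]
    simp only [hv'def]; ring
  have hv' : ∀ x ∈ Ioo (-1 : ℝ) 1, HasDerivAt v' (v'' x) x := by
    intro x hx
    have h1 := (((hq x hx).rpow_const (p := (-(5/4) : ℝ))
      (Or.inl (hqpos x hx).ne')).mul (hq' x hx)).const_mul (-(1/4) : ℝ)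
    refine (h1.congr_deriv ?_).congr_of_eventuallyEq (Filter.Eventually.of_forall fun y => ?_)
    · rw [show (-(5/4) : ℝ) - 1 = -(9/4) by norm_num]
      simp only [hv''def]; ring
    · simp only [hv'def, Pi.mul_apply]; ring
  have hvpos : ∀ x ∈ Ioo (-1 : ℝ) 1, 0 < v x := fun x hx =>
    Real.rpow_pos_of_pos (hqpos x hx) _
  -- initial values
  have hq0 : q 0 = 1 := by rw [hqnorm, hψ'0]; norm_num
  have hv0 : v 0 = 1 := by rw [hvdef]; simp [hq0]
  have hq'0 : q' 0 = 0 := by simp [hq'def, hψ''0]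
  have hv'0 : v' 0 = 0 := by simp [hv'def, hq'0]
  -- the key differential inequality
  have hkey : ∀ x ∈ Ioo (-1 : ℝ) 1, 0 ≤ v'' x + p x * v x := by
    intro x hx
    have hQ : 0 < q x := hqpos x hx
    set A : ℝ := (inner ℝ (deriv ψ x) (deriv (deriv (deriv ψ)) x) : ℝ) with hA
    set B : ℝ := (inner ℝ (deriv ψ x) (deriv (deriv ψ) x) : ℝ) with hB
    set C : ℝ := ‖deriv (deriv ψ) x‖ ^ 2 with hC
    have hCS : B ^ 2 ≤ q x * C := by
      have h1 := abs_real_inner_le_norm (deriv ψ x) (deriv (deriv ψ) x)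
      have h2 : B ^ 2 ≤ (‖deriv ψ x‖ * ‖deriv (deriv ψ) x‖) ^ 2 := by
        rw [← sq_abs B]
        exact pow_le_pow_left₀ (abs_nonneg _) h1 2
      calc B ^ 2 ≤ (‖deriv ψ x‖ * ‖deriv (deriv ψ) x‖) ^ 2 := h2
        _ = q x * C := by rw [hqnorm, hC]; ring
    have hS : A / q x - 3 * B ^ 2 / (q x) ^ 2 + (3 / 2) * C / q x ≤ 2 * p x := by
      have := hS1 x hx
      unfold ahlforsS1 at this
      rw [← hA, ← hB] at this
      have e2 : ‖deriv ψ x‖ ^ 2 = q x := (hqnorm x).symm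
      have e4 : ‖deriv ψ x‖ ^ 4 = (q x) ^ 2 := by rw [hqnorm]; ring
      rw [e2, e4, ← hC] at this
      exact this
    -- rewrite the rpow's
    set w : ℝ := q x ^ (-(1/4) : ℝ) with hw
    have hwpos : 0 < w := Real.rpow_pos_of_pos hQ _
    have e5 : q x ^ (-(5/4) : ℝ) = w * (q x)⁻¹ := by
      rw [show (-(5/4) : ℝ) = -(1/4) + (-1) by norm_num, Real.rpow_add hQ,
        Real.rpow_neg_one]
    have e9 : q x ^ (-(9/4) : ℝ) = w * ((q x) ^ 2)⁻¹ := by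
      rw [show (-(9/4) : ℝ) = -(1/4) + (-2) by norm_num, Real.rpow_add hQ]
      congr 1
      rw [show ((-2 : ℝ)) = -((2 : ℕ) : ℝ) by norm_num, Real.rpow_neg hQ.le,
        Real.rpow_natCast]
    have hq'x : q' x = 2 * B := by simp [hq'def, hB]
    have hq''x : q'' x = 2 * (C + A) := by simp [hq''def, hC, hA]
    have hvx : v x = w := rfl
    rw [hv''def]
    simp only
    rw [hq'x, hq''x, e5, e9, hvx]
    have hident : -(1/4) * (-(5/4) * (w * ((q x) ^ 2)⁻¹) * (2 * B) * (2 * B)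
        + (w * (q x)⁻¹) * (2 * (C + A))) + p x * w
        = w * ((1/4) * (q x * C - B ^ 2) / (q x) ^ 2)
          + w * ((2 * p x - (A / q x - 3 * B ^ 2 / (q x) ^ 2 + (3 / 2) * C / q x)) / 2) := by
      field_simp
      ring
    rw [hident]
    have t1 : 0 ≤ w * ((1/4) * (q x * C - B ^ 2) / (q x) ^ 2) := by
      apply mul_nonneg hwpos.le
      apply div_nonneg _ (sq_nonneg _)
      nlinarith
    have t2 : 0 ≤ w * ((2 * p x - (A / q x - 3 * B ^ 2 / (q x) ^ 2 + (3 / 2) * C / q x)) / 2) := by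
      apply mul_nonneg hwpos.le
      linarith
    linarith
  -- positivity of u₀
  have hupos : ∀ x ∈ Ioo (-1 : ℝ) 1, 0 < u₀ x := by
    intro x hx
    by_contra hle
    push_neg at hle
    have hne : u₀ x < 0 := lt_of_le_of_ne hle (hu₀ne x hx)
    have hsub : uIcc (0 : ℝ) x ⊆ Ioo (-1 : ℝ) 1 :=
      (ordConnected_Ioo.uIcc_subset h0 hx)
    have hcont : ContinuousOn u₀ (uIcc (0 : ℝ) x) := (hu₀.continuousOn).mono hsub
    have hiv := intermediate_value_uIcc hcont
    have h0mem : (0 : ℝ) ∈ uIcc (u₀ 0) (u₀ x) := by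
      rw [hu₀0]
      exact mem_uIcc.2 (Or.inr ⟨hne.le, by norm_num⟩)
    obtain ⟨c, hc, hc0⟩ := hiv h0mem
    exact hu₀ne c (hsub hc) hc0
  -- first comparison : u₀ ≤ v
  have hcomp₁ : ∀ x ∈ Ioo (-1 : ℝ) 1, u₀ x ≤ v x :=
    sturm_comparison_aux p u₀ v v' v'' hu₀ hu₀ode hu₀0 hu₀'0 hupos hv hv' hv0 hv'0 hkey
  -- reflected solution
  set ut : ℝ → ℝ := fun t => u₀ (-t) with hutdef
  have hmemneg : ∀ x ∈ Ioo (-1 : ℝ) 1, -x ∈ Ioo (-1 : ℝ) 1 := by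
    intro x hx
    constructor <;> [linarith [hx.2]; linarith [hx.1]]
  have hut : ContDiffOn ℝ 2 ut (Ioo (-1 : ℝ) 1) := by
    apply hu₀.comp ((contDiff_neg).contDiffOn)
    intro x hx
    exact hmemneg x hx
  have hut1 : deriv ut = fun x => -deriv u₀ (-x) := by
    funext x
    exact deriv_comp_neg u₀ x
  have hut2 : ∀ x, deriv (deriv ut) x = deriv (deriv u₀) (-x) := by
    intro x
    rw [hut1]
    simp only [deriv.fun_neg]
    rw [deriv_comp_neg, neg_neg]
  have hutode : ∀ x ∈ Ioo (-1 : ℝ) 1, deriv (deriv ut) x + p x * ut x = 0 := by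
    intro x hx
    rw [hut2]
    have h := hu₀ode (-x) (hmemneg x hx)
    rw [hpeven x hx] at h
    exact h
  have hut0 : ut 0 = 1 := by simp [hutdef, hu₀0]
  have hut'0 : deriv ut 0 = 0 := by rw [hut1]; simp [hu₀'0]
  have hutpos : ∀ x ∈ Ioo (-1 : ℝ) 1, 0 < ut x := fun x hx => hupos (-x) (hmemneg x hx)
  have hcomp₂ : ∀ x ∈ Ioo (-1 : ℝ) 1, ut x ≤ v x :=
    sturm_comparison_aux p ut v v' v'' hut hutode hut0 hut'0 hutpos hv hv' hv0 hv'0 hkey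
  -- conclusion
  intro x hx
  have habs : |x| ∈ Ioo (-1 : ℝ) 1 := by
    rw [mem_Ioo, abs_lt]
    constructor
    · linarith [abs_nonneg x]
    · constructor <;> [exact hx.1; exact hx.2]
  have hvge : u₀ |x| ≤ v x := by
    rcases abs_cases x with ⟨h, _⟩ | ⟨h, _⟩
    · rw [h]; exact hcomp₁ x hx
    · rw [h]; exact hcomp₂ x hx
  have huabs : 0 < u₀ |x| := hupos _ habs
  -- derivative of Φ
  have hΦfun : Φ = fun y => ∫ t in (0 : ℝ)..y, ((u₀ t) ^ 2)⁻¹ := funext hΦ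
  set g : ℝ → ℝ := fun t => ((u₀ t) ^ 2)⁻¹ with hgdef
  have hgc : ContinuousOn g (Ioo (-1 : ℝ) 1) := by
    apply ContinuousOn.inv₀ ((hu₀.continuousOn).pow 2)
    exact fun t ht => pow_ne_zero 2 (hu₀ne t ht)
  have hΦd : HasDerivAt Φ (g |x|) |x| := by
    rw [hΦfun]
    apply intervalIntegral.integral_hasDerivAt_right
    · apply ContinuousOn.intervalIntegrable
      apply hgc.mono
      exact ordConnected_Ioo.uIcc_subset h0 habs
    · exact hgc.stronglyMeasurableAtFilter isOpen_Ioo _ habs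
    · exact hgc.continuousAt (isOpen_Ioo.mem_nhds habs)
  rw [hΦd.deriv]
  -- |ψ' x| = (v x)⁻²
  have hnx : 0 < ‖deriv ψ x‖ := norm_pos_iff.2 (hψ' x hx)
  have hveq : ‖deriv ψ x‖ = ((v x) ^ 2)⁻¹ := by
    have hv2 : (v x) ^ 2 = ‖deriv ψ x‖⁻¹ := by
      rw [hvdef]
      simp only
      rw [← Real.rpow_natCast (q x ^ (-(1/4) : ℝ)) 2, ← Real.rpow_mul (hqpos x hx).le]
      rw [hqnorm, ← Real.rpow_natCast ‖deriv ψ x‖ 2, ← Real.rpow_mul (norm_nonneg _)]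
      norm_num
      rw [Real.rpow_neg_one]
    rw [hv2, inv_inv]
  rw [hveq, hgdef]
  simp only
  apply inv_anti₀ (pow_pos huabs 2)
  exact pow_le_pow_left₀ huabs.le hvge 2

end
end

section
/- There exist positive constants A, B, C and c₀ > 0 such that for every c with 0 < c ≤ c₀ and every w ∈ ℂ with |Im w| ≤ π/4, the complex number ζ = 12c²·(1 + c²w²)² / (|cw − i|⁴ + |cw + i|⁴)² satisfies: (i) |1 − Re ζ| ≤ 1 − |ζ| + A·c⁴·(Im w)²; (ii) |Im ζ| ≤ B·c³·|Im w|; and (iii) |1 − ζ| ≤ 1 − |ζ| + C·c⁴·(Im w)². -/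
open Complex Real

noncomputable section

/-- `ζ = 12c²(1 + c²w²)² / (|cw − i|⁴ + |cw + i|⁴)²`. -/
def zetaOf (c : ℝ) (w : ℂ) : ℂ :=
  12 * (c : ℂ) ^ 2 * (1 + (c : ℂ) ^ 2 * w ^ 2) ^ 2 /
    (((‖(c : ℂ) * w - Complex.I‖ ^ 4 +
        ‖(c : ℂ) * w + Complex.I‖ ^ 4 : ℝ) : ℂ)) ^ 2

set_option maxHeartbeats 4000000 in
/-- **Lemma 6.** There are absolute constants `A, B, C > 0` and `c₀ > 0` such that for
all `0 < c ≤ c₀` and all `w` with `|Im w| ≤ π/4`, the number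
`ζ = 12c²(1 + c²w²)²/(|cw − i|⁴ + |cw + i|⁴)²` satisfies
`|1 − Re ζ| ≤ 1 − |ζ| + Ac⁴(Im w)²`, `|Im ζ| ≤ Bc³|Im w|`, and
`|1 − ζ| ≤ 1 − |ζ| + Cc⁴(Im w)²`. -/
theorem example_estimates :
    ∃ A B C c₀ : ℝ, 0 < A ∧ 0 < B ∧ 0 < C ∧ 0 < c₀ ∧
      ∀ c : ℝ, 0 < c → c ≤ c₀ → ∀ w : ℂ, |w.im| ≤ π / 4 →
        |1 - (zetaOf c w).re| ≤ 1 - ‖zetaOf c w‖ + A * c ^ 4 * w.im ^ 2 ∧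
        |(zetaOf c w).im| ≤ B * c ^ 3 * |w.im| ∧
        ‖1 - zetaOf c w‖ ≤
          1 - ‖zetaOf c w‖ + C * c ^ 4 * w.im ^ 2 := by

  refine ⟨24, 6, 84, 1/3, by norm_num, by norm_num, by norm_num, by norm_num, ?_⟩
  intro c hc hc3 w _hw
  set x := w.re with hxd
  set y := w.im with hyd
  set z : ℂ := 1 + (c:ℂ)^2 * w^2 with hzd
  set A1 : ℝ := ‖(c:ℂ)*w - Complex.I‖ ^ 2 with hA1d
  set B1 : ℝ := ‖(c:ℂ)*w + Complex.I‖ ^ 2 with hB1d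
  set s : ℝ := A1^2 + B1^2 with hsd
  clear_value x y z A1 B1 s
  have hA1nn : 0 ≤ A1 := by rw [hA1d]; positivity
  have hB1nn : 0 ≤ B1 := by rw [hB1d]; positivity
  have h4 : (‖(c:ℂ)*w - Complex.I‖ ^ 4 +
      ‖(c:ℂ)*w + Complex.I‖ ^ 4 : ℝ) = s := by
    rw [hsd, hA1d, hB1d]; ring
  have hzre : z.re = 1 + c^2*x^2 - c^2*y^2 := by
    simp [hzd, pow_two, Complex.add_re, Complex.mul_re, Complex.mul_im,
      Complex.ofReal_re, Complex.ofReal_im]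
    rw [hxd, hyd]; ring
  have hzim : z.im = 2*c^2*x*y := by
    simp [hzd, pow_two, Complex.add_im, Complex.mul_re, Complex.mul_im,
      Complex.ofReal_re, Complex.ofReal_im]
    rw [hxd, hyd]; ring
  have hA1v : A1 = c^2*x^2 + (c*y-1)^2 := by
    rw [hA1d, Complex.sq_norm, Complex.normSq_apply]
    simp [Complex.sub_re, Complex.sub_im, Complex.mul_re, Complex.mul_im,
      Complex.ofReal_re, Complex.ofReal_im, Complex.I_re, Complex.I_im]
    rw [hxd, hyd]; ring
  have hB1v : B1 = c^2*x^2 + (c*y+1)^2 := by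
    rw [hB1d, Complex.sq_norm, Complex.normSq_apply]
    simp [Complex.add_re, Complex.add_im, Complex.mul_re, Complex.mul_im,
      Complex.ofReal_re, Complex.ofReal_im, Complex.I_re, Complex.I_im]
    rw [hxd, hyd]; ring
  have hzeta : zetaOf c w = ((12*c^2/s^2 : ℝ) : ℂ) * z^2 := by
    rw [zetaOf, h4, ← hzd]
    push_cast
    ring
  have hzfact : z = ((c:ℂ)*w - Complex.I) * ((c:ℂ)*w + Complex.I) := by
    have h : ((c:ℂ)*w - Complex.I) * ((c:ℂ)*w + Complex.I)
        = (c:ℂ)^2*w^2 - Complex.I^2 := by ring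
    rw [hzd, h, Complex.I_sq]; ring
  have hre : (zetaOf c w).re
      = 12*c^2/s^2 * ((1 + c^2*x^2 - c^2*y^2)^2 - (2*c^2*x*y)^2) := by
    rw [hzeta, Complex.re_ofReal_mul, show (z^2 : ℂ) = z*z from by ring,
      Complex.mul_re, hzre, hzim]
    ring
  have him : (zetaOf c w).im
      = 12*c^2/s^2 * (2*(1 + c^2*x^2 - c^2*y^2)*(2*c^2*x*y)) := by
    rw [hzeta, Complex.im_ofReal_mul, show (z^2 : ℂ) = z*z from by ring,
      Complex.mul_im, hzre, hzim]
    ring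
  -- basic positivity facts
  have hPnn : (1:ℝ) ≤ 1 + c^2*x^2 + c^2*y^2 := by
    linarith [sq_nonneg (c*x), sq_nonneg (c*y)]
  have hsge : 2*(1 + c^2*x^2 + c^2*y^2)^2 ≤ s := by
    rw [hsd, hA1v, hB1v]; linarith [sq_nonneg (c*y)]
  have hspos : 0 < s := by
    have h1 := mul_le_mul hPnn hPnn zero_le_one
      (by linarith : (0:ℝ) ≤ 1 + c^2*x^2 + c^2*y^2)
    nlinarith [hsge, h1]
  have habs : ‖zetaOf c w‖ = 12*c^2/s^2 * (A1*B1) := by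
    rw [hzeta, norm_mul, Complex.norm_real, Real.norm_eq_abs, norm_pow, hzfact, norm_mul,
      _root_.abs_of_nonneg (div_nonneg (by positivity) (sq_nonneg s)), mul_pow, ← hA1d, ← hB1d]
  -- abbreviations
  set T : ℝ := 1 + c^2*x^2 - c^2*y^2 with hTd
  set G : ℝ := 2*c^2*x*y with hGd
  set P : ℝ := 1 + c^2*x^2 + c^2*y^2 with hPd
  set Q : ℝ := 12*c^2/s^2 with hQd
  clear_value T G P Q
  have hs2pos : (0:ℝ) < s^2 := pow_pos hspos 2
  have hprod : A1*B1 = T^2 + G^2 := by rw [hA1v, hB1v, hTd, hGd]; ring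
  have hG2 : G^2 = 4*c^4*x^2*y^2 := by rw [hGd]; ring
  have hs2 : 4*P^4 ≤ s^2 := by
    linarith [mul_le_mul hsge hsge (by positivity) hspos.le]
  have hT2 : T^2 ≤ P^2 := by
    rw [hTd, hPd]
    linarith [mul_nonneg (sq_nonneg (c*x)) (sq_nonneg (c*y)), sq_nonneg (c*y)]
  have hcx : 4*c^2*x^2 ≤ P^2 := by
    rw [hPd]
    linarith [sq_nonneg (1 - c^2*x^2), sq_nonneg (c*y),
      mul_nonneg (sq_nonneg (c*x)) (sq_nonneg (c*y)), sq_nonneg (c*y*(c*y))]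
  have hPnn' : (1:ℝ) ≤ P := hPnn
  have hP2 : (1:ℝ) ≤ P^2 := by
    linarith [mul_le_mul hPnn' hPnn' zero_le_one (by linarith : (0:ℝ) ≤ P)]
  have hP4 : (1:ℝ) ≤ P^4 := by
    linarith [mul_le_mul hP2 hP2 zero_le_one (by positivity : (0:ℝ) ≤ P^2)]
  have hP48 : P^4 ≤ P^8 := by
    linarith [mul_le_mul_of_nonneg_left hP4 (by positivity : (0:ℝ) ≤ P^4)]
  have hc1 : c ≤ 1 := le_trans hc3 (by norm_num)
  have hc2 : c^2 ≤ 1 := by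
    linarith [mul_le_mul hc1 hc1 hc.le zero_le_one]
  -- |zeta| ≤ 3c² ≤ 1/2
  have habs_le : ‖zetaOf c w‖ ≤ 3*c^2 := by
    rw [habs, hQd, div_mul_eq_mul_div, div_le_iff₀ hs2pos]
    have h2ab : 2*(A1*B1) ≤ s := by rw [hsd]; linarith [sq_nonneg (A1 - B1)]
    have hs2' : (2:ℝ) ≤ s := by linarith [hsge, hP2]
    have f1 : 0 ≤ c^2*(s*s - 2*(A1*B1)*s) :=
      mul_nonneg (sq_nonneg c)
        (sub_nonneg.2 (mul_le_mul_of_nonneg_right h2ab hspos.le))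
    have f2 : 0 ≤ c^2*((A1*B1)*s - (A1*B1)*2) :=
      mul_nonneg (sq_nonneg c)
        (sub_nonneg.2 (mul_le_mul_of_nonneg_left hs2' (mul_nonneg hA1nn hB1nn)))
    linarith [f1, f2]
  have habs_half : ‖zetaOf c w‖ ≤ 1/2 := by
    have := mul_le_mul hc3 hc3 hc.le (by norm_num : (0:ℝ) ≤ 1/3)
    linarith [habs_le]
  have habs_nn : 0 ≤ ‖zetaOf c w‖ := norm_nonneg _
  have hre_le : |(zetaOf c w).re| ≤ ‖zetaOf c w‖ := Complex.abs_re_le_norm _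
  -- |zeta| - Re zeta ≤ 24 c^4 y^2
  have hcxs : 4*c^2*x^2 ≤ s^2 := by
    linarith [hcx, hP2, hs2, mul_le_mul_of_nonneg_left hP2 (sq_nonneg P),
      sq_nonneg (P^2)]
  have hm_r : ‖zetaOf c w‖ - (zetaOf c w).re ≤ 24*c^4*y^2 := by
    rw [habs, hre]
    have heq : Q*(A1*B1) - Q*(T^2 - G^2) = Q*(2*G^2) := by rw [hprod]; ring
    rw [heq, hQd, div_mul_eq_mul_div, div_le_iff₀ hs2pos, hG2]
    linarith [mul_le_mul_of_nonneg_left hcxs (by positivity : (0:ℝ) ≤ 6*c^4*y^2)]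
  -- part (ii)
  have hii : |(zetaOf c w).im| ≤ 6*c^3*|y| := by
    rw [him]
    have hsq : (Q*(2*T*G))^2 ≤ 36*c^6*y^2 := by
      rw [hQd, div_mul_eq_mul_div, div_pow, div_le_iff₀ (pow_pos hs2pos 2)]
      have e0 : (12*c^2*(2*T*G))^2 = 2304*c^8*x^2*y^2*T^2 := by rw [hGd]; ring
      rw [e0]
      have e1 : 2304*c^8*x^2*y^2*T^2 ≤ 2304*c^8*x^2*y^2*P^2 :=
        mul_le_mul_of_nonneg_left hT2 (by positivity)
      have e2 : 576*c^6*y^2*P^2*(4*c^2*x^2) ≤ 576*c^6*y^2*P^2*P^2 :=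
        mul_le_mul_of_nonneg_left hcx (by positivity)
      have e3 : 576*c^6*y^2*P^4 ≤ 576*c^6*y^2*P^8 :=
        mul_le_mul_of_nonneg_left hP48 (by positivity)
      have e5 : 36*c^6*y^2*((4*P^4)*(4*P^4)) ≤ 36*c^6*y^2*(s^2*s^2) :=
        mul_le_mul_of_nonneg_left
          (mul_le_mul hs2 hs2 (by positivity) (by positivity)) (by positivity)
      linarith [e1, e2, e3, e5]
    have hrhs : (0:ℝ) ≤ 6*c^3*|y| := by positivity
    have h := Real.sqrt_le_sqrt hsq
    rw [Real.sqrt_sq_eq_abs,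
      show (36*c^6*y^2 : ℝ) = (6*c^3*|y|)^2 by rw [mul_pow, mul_pow, _root_.sq_abs]; ring,
      Real.sqrt_sq hrhs] at h
    exact h
  have hii2 : ((zetaOf c w).im)^2 ≤ 36*c^4*y^2 := by
    have e : (6*c^3*|y|)^2 = 36*c^6*y^2 := by
      rw [mul_pow, mul_pow, _root_.sq_abs]; ring
    have h1 : ((zetaOf c w).im)^2 ≤ 36*c^6*y^2 := by
      have h0 := pow_le_pow_left₀ (abs_nonneg ((zetaOf c w).im)) hii 2
      rwa [_root_.sq_abs, e] at h0
    linarith [h1, mul_nonneg (mul_nonneg (pow_nonneg hc.le 4) (sub_nonneg.2 hc2))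
      (sq_nonneg y)]
  refine ⟨?_, hii, ?_⟩
  · -- part (i)
    have h1 : (zetaOf c w).re ≤ 1/2 :=
      le_trans (le_trans (le_abs_self _) hre_le) habs_half
    rw [_root_.abs_of_nonneg (by linarith : (0:ℝ) ≤ 1 - (zetaOf c w).re)]
    linarith [hm_r]
  · -- part (iii)
    have hnre : -(1/2 : ℝ) ≤ (zetaOf c w).re := by
      have := neg_abs_le ((zetaOf c w).re); linarith [hre_le, habs_half]
    have hu2 : (‖1 - zetaOf c w‖)^2
        = (1 - (zetaOf c w).re)^2 + ((zetaOf c w).im)^2 := by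
      rw [Complex.sq_norm, Complex.normSq_apply, Complex.sub_re, Complex.sub_im,
        Complex.one_re, Complex.one_im]
      ring
    set E : ℝ := 84*c^4*y^2 with hEd
    clear_value E
    have hE : 0 ≤ E := by rw [hEd]; positivity
    have k1 : 60*c^4*y^2 ≤ (1 - ‖zetaOf c w‖ + E) - (1 - (zetaOf c w).re) := by
      rw [hEd]; linarith [hm_r]
    have k2 : (1:ℝ) ≤ (1 - ‖zetaOf c w‖ + E) + (1 - (zetaOf c w).re) := by
      have h1 : (zetaOf c w).re ≤ 1/2 :=
        le_trans (le_trans (le_abs_self _) hre_le) habs_half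
      linarith [habs_half]
    have kprod := mul_le_mul k1 k2 (by norm_num) (le_trans (by positivity) k1)
    have hfin2 : (‖1 - zetaOf c w‖)^2
        ≤ (1 - ‖zetaOf c w‖ + E)^2 := by
      rw [hu2]; linarith [kprod, hii2]
    have hbase : (0:ℝ) ≤ 1 - ‖zetaOf c w‖ + E := by linarith [habs_half]
    have h := Real.sqrt_le_sqrt hfin2
    rw [Real.sqrt_sq (norm_nonneg _), Real.sqrt_sq hbase] at h
    exact h

end
end

section
/- Let ρ ∈ (−1,1) and let T(z) = (z − iρ)/(1 + iρz), a Möbius self-map of the unit disk. Then: (i) |x| ≤ |T(x)| for all x ∈ (−1,1); and (ii) if p : [0,1) → ℝ is positive and continuous with (1−x²)²·p(x) non-increasing on [0,1), then p(|T(x)|)·|T'(x)|² ≤ p(|x|) for all x ∈ (−1,1). -/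
open Set Complex

noncomputable section

lemma moebius_aux (ρ : ℝ) (hρ : ρ ∈ Ioo (-1 : ℝ) 1)
    (T : ℂ → ℂ)
    (hT : ∀ z, T z = (z - (ρ : ℂ) * Complex.I) / (1 + (ρ : ℂ) * Complex.I * z))
    (x : ℝ) (hx : x ∈ Ioo (-1 : ℝ) 1) :
    ‖T (x : ℂ)‖ ^ 2 = (x ^ 2 + ρ ^ 2) / (1 + ρ ^ 2 * x ^ 2) ∧
    ‖deriv T (x : ℂ)‖ ^ 2 = (1 - ρ ^ 2) ^ 2 / (1 + ρ ^ 2 * x ^ 2) ^ 2 := by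
  have hTeq : T = fun z => (z - (ρ : ℂ) * Complex.I) / (1 + (ρ : ℂ) * Complex.I * z) :=
    funext hT
  have hD : (0:ℝ) < 1 + ρ ^ 2 * x ^ 2 := by positivity
  have hne : (1 + (ρ : ℂ) * Complex.I * (x : ℂ)) ≠ 0 := by
    intro h
    have := congrArg Complex.re h
    simp [Complex.add_re, Complex.mul_re, Complex.mul_im] at this
  have hnsq : Complex.normSq (1 + (ρ : ℂ) * Complex.I * (x : ℂ)) = 1 + ρ ^ 2 * x ^ 2 := by
    simp [Complex.normSq_apply, Complex.add_re, Complex.add_im, Complex.mul_re,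
      Complex.mul_im]
    ring
  constructor
  · rw [hT, Complex.sq_norm, Complex.normSq_div, hnsq]
    congr 1
    simp [Complex.normSq_apply, Complex.sub_re, Complex.sub_im, Complex.mul_re,
      Complex.mul_im]
    ring
  · have hder : HasDerivAt T
        ((1 * (1 + (ρ : ℂ) * Complex.I * (x:ℂ)) - ((x:ℂ) - (ρ : ℂ) * Complex.I) * ((ρ : ℂ) * Complex.I * 1))
          / (1 + (ρ : ℂ) * Complex.I * (x:ℂ)) ^ 2) (x : ℂ) := by
      rw [hTeq]
      exact ((hasDerivAt_id (x:ℂ)).sub_const _).div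
        ((((hasDerivAt_id (x:ℂ)).const_mul ((ρ : ℂ) * Complex.I))).const_add 1) hne
    have hval : deriv T (x : ℂ) =
        ((1 : ℂ) - (ρ:ℂ)^2) / (1 + (ρ : ℂ) * Complex.I * (x:ℂ)) ^ 2 := by
      rw [hder.deriv]
      have h2 : (1 + (ρ : ℂ) * Complex.I * (x:ℂ)) ^ 2 ≠ 0 := pow_ne_zero _ hne
      field_simp
      ring_nf
      simp [Complex.I_sq]
      ring
    rw [hval, Complex.sq_norm, Complex.normSq_div]
    have h1 : ((1 : ℂ) - (ρ:ℂ)^2) = ((1 - ρ^2 : ℝ) : ℂ) := by push_cast; ring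
    rw [h1, Complex.normSq_ofReal, map_pow, hnsq]
    ring

/-- **Nehari's Möbius trick.** For `T(z) = (z − iρ)/(1 + iρz)` with `ρ ∈ (−1,1)`:
(i) `|x| ≤ |T(x)|` on `(−1,1)`; (ii) if `p` is positive and continuous on `[0,1)` with
`(1−x²)²p(x)` non-increasing there, then `p(|T(x)|)|T'(x)|² ≤ p(|x|)` on `(−1,1)`. -/
theorem moebius_trick (ρ : ℝ) (hρ : ρ ∈ Ioo (-1 : ℝ) 1)
    (T : ℂ → ℂ)
    (hT : ∀ z, T z = (z - (ρ : ℂ) * Complex.I) / (1 + (ρ : ℂ) * Complex.I * z)) :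
    (∀ x ∈ Ioo (-1 : ℝ) 1, |x| ≤ ‖T (x : ℂ)‖) ∧
    (∀ p : ℝ → ℝ, ContinuousOn p (Ico (0 : ℝ) 1) → (∀ x ∈ Ico (0 : ℝ) 1, 0 < p x) →
      AntitoneOn (fun x => (1 - x ^ 2) ^ 2 * p x) (Ico (0 : ℝ) 1) →
      ∀ x ∈ Ioo (-1 : ℝ) 1,
        p (‖T (x : ℂ)‖) * ‖deriv T (x : ℂ)‖ ^ 2 ≤ p |x|) := by
  have hρ2 : ρ ^ 2 < 1 := by nlinarith [hρ.1, hρ.2]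
  have main : ∀ x ∈ Ioo (-1 : ℝ) 1, |x| ≤ ‖T (x : ℂ)‖ := by
    intro x hx
    obtain ⟨hu2, -⟩ := moebius_aux ρ hρ T hT x hx
    have hx2 : x ^ 2 < 1 := by nlinarith [hx.1, hx.2]
    have hD : (0:ℝ) < 1 + ρ ^ 2 * x ^ 2 := by positivity
    have hle : x ^ 2 ≤ ‖T (x : ℂ)‖ ^ 2 := by
      rw [hu2, le_div_iff₀ hD]
      nlinarith [sq_nonneg (ρ * (1 - x^2)), sq_nonneg ρ, sq_nonneg x, sq_nonneg (ρ*x)]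
    nlinarith [norm_nonneg (T (x:ℂ)), abs_nonneg x, _root_.sq_abs x]
  refine ⟨main, ?_⟩
  intro p hpc hpos hanti x hx
  obtain ⟨hu2, hd2⟩ := moebius_aux ρ hρ T hT x hx
  set u := ‖T (x : ℂ)‖ with hu
  have hx2 : x ^ 2 < 1 := by nlinarith [hx.1, hx.2]
  have hD : (0:ℝ) < 1 + ρ ^ 2 * x ^ 2 := by positivity
  have h1u : 1 - u ^ 2 = (1 - x ^ 2) * (1 - ρ ^ 2) / (1 + ρ ^ 2 * x ^ 2) := by
    rw [hu2]; field_simp; ring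
  have hu0 : 0 ≤ u := norm_nonneg _
  have hu1 : u < 1 := by
    have : 0 < 1 - u ^ 2 := by
      rw [h1u]
      exact div_pos (mul_pos (by linarith) (by linarith)) hD
    nlinarith
  have hxu : |x| ≤ u := main x hx
  have hxmem : |x| ∈ Ico (0:ℝ) 1 := ⟨abs_nonneg x, abs_lt.mpr ⟨hx.1, hx.2⟩⟩
  have humem : u ∈ Ico (0:ℝ) 1 := ⟨hu0, hu1⟩
  have hmono := hanti hxmem humem hxu
  simp only [_root_.sq_abs] at hmono
  have hne1 : (1 - x ^ 2) ≠ 0 := by nlinarith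
  have hne2 : (1 + ρ ^ 2 * x ^ 2) ≠ 0 := ne_of_gt hD
  have hd2' : ‖deriv T (x : ℂ)‖ ^ 2 = (1 - u ^ 2) ^ 2 / (1 - x ^ 2) ^ 2 := by
    rw [hd2, h1u]
    field_simp
  rw [hd2']
  have hpx : 0 < p |x| := hpos _ hxmem
  have h1x2 : (0:ℝ) < (1 - x ^ 2) ^ 2 := pow_pos (by linarith) 2
  rw [div_eq_mul_inv, ← mul_assoc, ← div_eq_mul_inv, div_le_iff₀ h1x2]
  calc p u * (1 - u ^ 2) ^ 2 = (1 - u ^ 2) ^ 2 * p u := by ring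
    _ ≤ (1 - x ^ 2) ^ 2 * p |x| := hmono
    _ = p |x| * (1 - x ^ 2) ^ 2 := by ring

end
end
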